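/- Uhlmann's theorem: let ρ, σ be density operators on a finite-dimensional space X, with purifications |ψ_ρ⟩, |ψ_σ⟩ on X ⊗ Y. Then there exists a unitary U acting only on Y such that |⟨ψ_σ|(I_X ⊗ U)|ψ_ρ⟩|² = F(ρ, σ). -/

import Mathlib

open Matrix
open scoped ComplexOrder Kronecker
noncomputable section

/-- Square root of a matrix: the PSD square root if the matrix is PSD, else 0. -/
noncomputable def matSqrt {n : Type*} [Fintype n] [DecidableEq n]
    (A : Matrix n n ℂ) : Matrix n n ℂ :=
  open scoped Classical in
  if h : A.PosSemidef then
    (h.1.eigenvectorUnitary : Matrix n n ℂ) * diagonal ((↑) ∘ (√·) ∘ h.1.eigenvalues) *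
      (star (h.1.eigenvectorUnitary : Matrix n n ℂ))
  else 0

/-- Trace norm ‖A‖₁ = Tr √(AᴴA). -/
noncomputable def traceNorm {n : Type*} [Fintype n] [DecidableEq n]
    (A : Matrix n n ℂ) : ℝ :=
  (Matrix.trace (matSqrt (Aᴴ * A))).re

/-- Trace distance TD(ρ,σ) = (1/2)‖ρ−σ‖₁. -/
noncomputable def TD {n : Type*} [Fintype n] [DecidableEq n]
    (ρ σ : Matrix n n ℂ) : ℝ :=
  traceNorm (ρ - σ) / 2

/-- Uhlmann fidelity F(ρ,σ) = (Tr √(√σ ρ √σ))². -/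
noncomputable def fidelity {n : Type*} [Fintype n] [DecidableEq n]
    (ρ σ : Matrix n n ℂ) : ℝ :=
  ((Matrix.trace (matSqrt (matSqrt σ * ρ * matSqrt σ))).re) ^ 2

/-- ρ is a density matrix: positive semidefinite with unit trace. -/
def IsDensity {n : Type*} [Fintype n] [DecidableEq n]
    (ρ : Matrix n n ℂ) : Prop :=
  ρ.PosSemidef ∧ ρ.trace = 1

/-- The reduced state on X of a pure state on X ⊗ Y (Y traced out). -/
noncomputable def redX {X Y : Type*} [Fintype X] [Fintype Y]
    (ψ : X × Y → ℂ) : Matrix X X ℂ :=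
  Matrix.of fun x x' => ∑ y, ψ (x, y) * (starRingEnd ℂ) (ψ (x', y))

/-! Write a purification `ψ` as the matrix `K = (ψ (x, y))ₓᵧ`, so that `redX ψ = K Kᴴ`. Two
matrices with the same Gram matrix differ by a unitary (extend the isometry `B v ↦ A v` from the
range of `B` to the whole space). Hence every purification of `ρ` is `√ρ E V` for a fixed
co-isometry `E : X → Y` and a unitary `V`, and `√σ √ρ = S Q` with `S = √(√σ ρ √σ)` and `Q` unitary.
With `L` the matrix of `ψσ`, the overlap `⟨ψσ|(I ⊗ U)|ψρ⟩ = tr (Lᴴ K Uᵀ)` becomes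
`tr (S Q E W Eᴴ)` for a unitary `W` determined by `U`; choosing `W` with `E W Eᴴ = Q⋆` (a unitary
dilation of `Q⋆`) makes it `tr S = √F(ρ, σ)`. -/

open scoped MatrixOrder

section MatSqrt

variable {n : Type*} [Fintype n] [DecidableEq n] {A : Matrix n n ℂ}

lemma matSqrt_eq_sqrt (hA : A.PosSemidef) : matSqrt A = CFC.sqrt A := by
  rw [CFC.sqrt_eq_cfc, cfc_nnreal_eq_real _ A, hA.1.cfc_eq, matSqrt, dif_pos hA,
    IsHermitian.cfc, Unitary.conjStarAlgAut_apply]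
  congr 3
  ext i
  simp [hA.eigenvalues_nonneg i]

lemma posSemidef_matSqrt (hA : A.PosSemidef) : (matSqrt A).PosSemidef := by
  rw [matSqrt_eq_sqrt hA]
  exact (CFC.sqrt_nonneg A).posSemidef

lemma isHermitian_matSqrt (hA : A.PosSemidef) : (matSqrt A).IsHermitian :=
  (posSemidef_matSqrt hA).1

lemma matSqrt_mul_self (hA : A.PosSemidef) : matSqrt A * matSqrt A = A := by
  rw [matSqrt_eq_sqrt hA]
  exact CFC.sqrt_mul_sqrt_self A hA.nonneg

lemma fidelity_eq_norm_trace_sq {ρ σ : Matrix n n ℂ} (hρ : ρ.PosSemidef) (hσ : σ.PosSemidef) :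
    fidelity ρ σ = ‖trace (matSqrt (matSqrt σ * ρ * matSqrt σ))‖ ^ 2 := by
  rw [fidelity, Complex.re_eq_norm.mpr (posSemidef_matSqrt ?_).trace_nonneg]
  simpa [(isHermitian_matSqrt hσ).eq] using hρ.mul_mul_conjTranspose_same (matSqrt σ)

end MatSqrt

section UnitaryFreedom

variable {m n : Type*} [Fintype m] [Fintype n] [DecidableEq n]

lemma norm_toEuclideanLin_eq_of_conjTranspose_mul_self_eq {A B : Matrix m n ℂ}
    (h : Aᴴ * A = Bᴴ * B) (x : EuclideanSpace ℂ n) :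
    ‖toEuclideanLin A x‖ = ‖toEuclideanLin B x‖ := by
  have key : ∀ C : Matrix m n ℂ,
      ‖toEuclideanLin C x‖ ^ 2 = RCLike.re ((Cᴴ * C) *ᵥ x.ofLp ⬝ᵥ star x.ofLp) := fun C => by
    rw [norm_sq_eq_re_inner (𝕜 := ℂ), EuclideanSpace.inner_eq_star_dotProduct]
    simp only [← mulVec_mulVec, ofLp_toLpLin, toLin'_apply, star_mulVec]
    rw [dotProduct_comm (Cᴴ *ᵥ _), dotProduct_mulVec, dotProduct_comm]
  rw [← pow_left_inj₀ (norm_nonneg _) (norm_nonneg _) two_ne_zero, key, key, h]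

variable [DecidableEq m]

theorem exists_mem_unitaryGroup_eq_mul_of_conjTranspose_mul_self_eq {A B : Matrix m n ℂ}
    (h : Aᴴ * A = Bᴴ * B) : ∃ V ∈ unitaryGroup m ℂ, A = V * B := by
  set a := toEuclideanLin A
  set b := toEuclideanLin B
  have hnorm := norm_toEuclideanLin_eq_of_conjTranspose_mul_self_eq h
  have hker : LinearMap.ker b ≤ LinearMap.ker a := fun x hx => by
    rw [LinearMap.mem_ker, ← norm_eq_zero, hnorm, norm_eq_zero, ← LinearMap.mem_ker]
    exact hx
  set L₀ := (LinearMap.ker b).liftQ a hker ∘ₗ b.quotKerEquivRange.symm.toLinearMap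
  have hL₀ : ∀ x, L₀ ⟨b x, LinearMap.mem_range_self b x⟩ = a x := fun x => by
    simp [L₀, LinearMap.quotKerEquivRange_symm_apply_image]
  let L : LinearMap.range b →ₗᵢ[ℂ] EuclideanSpace ℂ m :=
    { L₀ with
      norm_map' := by
        rintro ⟨_, x, rfl⟩
        exact (congrArg norm (hL₀ x)).trans (hnorm x) }
  let f := L.extend.toLinearIsometryEquiv rfl
  have hf : ∀ x, f (b x) = a x := fun x =>
    (L.extend_apply ⟨b x, LinearMap.mem_range_self b x⟩).trans (hL₀ x)
  set β := EuclideanSpace.basisFun m ℂ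
  refine ⟨LinearMap.toMatrix β.toBasis β.toBasis f.toLinearEquiv.toLinearMap,
    f.toMatrix_mem_unitaryGroup β β, toEuclideanLin.injective ?_⟩
  rw [toEuclideanLin_eq_toLin_orthonormal, Matrix.toLin_mul _ β.toBasis, Matrix.toLin_toMatrix]
  ext1 x
  exact (hf x).symm

lemma exists_mul_conjTranspose_eq_one (h : Fintype.card m ≤ Fintype.card n) :
    ∃ E : Matrix m n ℂ, E * Eᴴ = 1 := by
  obtain ⟨ι⟩ := Function.Embedding.nonempty_of_card_le h
  refine ⟨(1 : Matrix n n ℂ).submatrix ι id, ?_⟩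
  rw [conjTranspose_submatrix, conjTranspose_one, ← submatrix_mul _ _ _ _ _ Function.bijective_id,
    Matrix.mul_one, submatrix_one_embedding]

lemma exists_mem_unitaryGroup_eq_matSqrt_mul (A : Matrix m n ℂ) {E : Matrix m n ℂ}
    (hE : E * Eᴴ = 1) : ∃ V ∈ unitaryGroup n ℂ, A = matSqrt (A * Aᴴ) * E * V := by
  have hA := posSemidef_self_mul_conjTranspose A
  have hS := isHermitian_matSqrt hA
  obtain ⟨W, hW, hAW⟩ := exists_mem_unitaryGroup_eq_mul_of_conjTranspose_mul_self_eq
    (A := Aᴴ) (B := Eᴴ * matSqrt (A * Aᴴ)) (by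
      rw [conjTranspose_conjTranspose, conjTranspose_mul, conjTranspose_conjTranspose, hS.eq,
        Matrix.mul_assoc, ← Matrix.mul_assoc E, hE, Matrix.one_mul, matSqrt_mul_self hA])
  refine ⟨star W, Unitary.star_mem hW, ?_⟩
  simpa [hS.eq, Matrix.mul_assoc, star_eq_conjTranspose] using congrArg conjTranspose hAW

lemma exists_mem_unitaryGroup_mul_conjTranspose_eq {E : Matrix m n ℂ} (hE : E * Eᴴ = 1)
    {M : Matrix m m ℂ} (hM : M ∈ unitaryGroup m ℂ) :
    ∃ G ∈ unitaryGroup n ℂ, G * Eᴴ = Eᴴ * M := by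
  obtain ⟨G, hG, hEM⟩ := exists_mem_unitaryGroup_eq_mul_of_conjTranspose_mul_self_eq
    (A := Eᴴ * M) (B := Eᴴ) (by
      rw [conjTranspose_mul, conjTranspose_conjTranspose, Matrix.mul_assoc, ← Matrix.mul_assoc E,
        hE, Matrix.one_mul, ← star_eq_conjTranspose, (mem_unitaryGroup_iff').mp hM])
  exact ⟨G, hG, hEM.symm⟩

end UnitaryFreedom

section Uhlmann

variable {X Y : Type*} [Fintype X] [Fintype Y]

lemma redX_eq_mul_conjTranspose (ψ : X × Y → ℂ) :
    redX ψ = of (Function.curry ψ) * (of (Function.curry ψ))ᴴ := by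
  ext x x'
  simp [redX, mul_apply]

lemma posSemidef_redX (ψ : X × Y → ℂ) : (redX ψ).PosSemidef :=
  redX_eq_mul_conjTranspose ψ ▸ posSemidef_self_mul_conjTranspose _

variable [DecidableEq X]

lemma star_dotProduct_one_kronecker_mulVec (φ ψ : X × Y → ℂ) (U : Matrix Y Y ℂ) :
    star φ ⬝ᵥ ((1 : Matrix X X ℂ) ⊗ₖ U) *ᵥ ψ =
      trace ((of (Function.curry φ))ᴴ * of (Function.curry ψ) * Uᵀ) := by
  have hvec : ∀ χ : X × Y → ℂ, χ = vec (of (Function.curry χ))ᵀ := fun _ => rfl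
  conv_lhs => rw [hvec φ, hvec ψ]
  rw [kronecker_mulVec_vec, star_vec_dotProduct_vec, transpose_one, Matrix.mul_one,
    ← trace_transpose, transpose_mul, transpose_mul, transpose_transpose,
    conjTranspose_transpose_eq_transpose_conjTranspose, transpose_transpose, trace_mul_comm,
    Matrix.mul_assoc]

variable [DecidableEq Y]

lemma exists_mem_unitaryGroup_matSqrt_mul_matSqrt_eq {ρ σ : Matrix X X ℂ}
    (hρ : ρ.PosSemidef) (hσ : σ.PosSemidef) : ∃ Q ∈ unitaryGroup X ℂ,
      matSqrt σ * matSqrt ρ = matSqrt (matSqrt σ * ρ * matSqrt σ) * Q := by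
  obtain ⟨Q, hQ, hT⟩ :=
    exists_mem_unitaryGroup_eq_matSqrt_mul (matSqrt σ * matSqrt ρ) (E := 1) (by simp)
  have hTT : matSqrt σ * matSqrt ρ * (matSqrt σ * matSqrt ρ)ᴴ = matSqrt σ * ρ * matSqrt σ := by
    rw [conjTranspose_mul, (isHermitian_matSqrt hρ).eq, (isHermitian_matSqrt hσ).eq,
      Matrix.mul_assoc, ← Matrix.mul_assoc (matSqrt ρ), matSqrt_mul_self hρ, Matrix.mul_assoc]
  rw [hTT, Matrix.mul_one] at hT
  exact ⟨Q, hQ, hT⟩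

lemma trace_conjTranspose_mul_mul_eq_of_polar {E : Matrix X Y ℂ} (hE : E * Eᴴ = 1)
    {P R S Q : Matrix X X ℂ} {VK VL G : Matrix Y Y ℂ} (hR : R.IsHermitian)
    (hVK : VK ∈ unitaryGroup Y ℂ) (hVL : VL ∈ unitaryGroup Y ℂ) (hQ : Q ∈ unitaryGroup X ℂ)
    (hRP : R * P = S * Q) (hGE : G * Eᴴ = Eᴴ * star Q) :
    trace ((R * E * VL)ᴴ * (P * E * VK) * (star VK * G * VL)) = trace S := by
  calc trace ((R * E * VL)ᴴ * (P * E * VK) * (star VK * G * VL))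
      = trace (star VL * (Eᴴ * (R * P) * E * (VK * star VK) * G * VL)) := by
        simp only [conjTranspose_mul, hR.eq, star_eq_conjTranspose, Matrix.mul_assoc]
    _ = trace (Eᴴ * (S * Q) * E * G * (VL * star VL)) := by
        rw [trace_mul_comm, hRP, Unitary.mul_star_self_of_mem hVK, Matrix.mul_one]
        simp only [Matrix.mul_assoc]
    _ = trace (Eᴴ * (S * Q * E * G)) := by
        rw [Unitary.mul_star_self_of_mem hVL, Matrix.mul_one]
        simp only [Matrix.mul_assoc]
    _ = trace (S * Q * E * G * Eᴴ) := trace_mul_comm _ _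
    _ = trace S := by
        rw [Matrix.mul_assoc _ G, hGE, ← Matrix.mul_assoc, Matrix.mul_assoc (S * Q), hE,
          Matrix.mul_one, Matrix.mul_assoc, Unitary.mul_star_self_of_mem hQ, Matrix.mul_one]

end Uhlmann

theorem uhlmann_general
    {X Y : Type*} [Fintype X] [DecidableEq X] [Fintype Y] [DecidableEq Y]
    (hdim : Fintype.card X ≤ Fintype.card Y)
    (ρ σ : Matrix X X ℂ)
    (ψρ ψσ : X × Y → ℂ)
    (hψρ : redX ψρ = ρ) (hψσ : redX ψσ = σ) :
    ∃ U : Matrix Y Y ℂ, Uᴴ * U = 1 ∧ U * Uᴴ = 1 ∧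
      ‖star ψσ ⬝ᵥ ((1 : Matrix X X ℂ) ⊗ₖ U).mulVec ψρ‖ ^ 2 =
        fidelity ρ σ := by
  obtain ⟨E, hE⟩ := exists_mul_conjTranspose_eq_one hdim
  have hρ : ρ.PosSemidef := hψρ ▸ posSemidef_redX ψρ
  have hσ : σ.PosSemidef := hψσ ▸ posSemidef_redX ψσ
  rw [redX_eq_mul_conjTranspose] at hψρ hψσ
  obtain ⟨VK, hVK, hK⟩ := exists_mem_unitaryGroup_eq_matSqrt_mul (of (Function.curry ψρ)) hE
  obtain ⟨VL, hVL, hL⟩ := exists_mem_unitaryGroup_eq_matSqrt_mul (of (Function.curry ψσ)) hE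
  obtain ⟨Q, hQ, hRP⟩ := exists_mem_unitaryGroup_matSqrt_mul_matSqrt_eq hρ hσ
  obtain ⟨G, hG, hGE⟩ := exists_mem_unitaryGroup_mul_conjTranspose_eq hE (Unitary.star_mem hQ)
  have hU : (star VK * G * VL)ᵀ ∈ unitaryGroup Y ℂ :=
    transpose_mem_unitaryGroup_iff.mpr (mul_mem (mul_mem (Unitary.star_mem hVK) hG) hVL)
  refine ⟨_, (mem_unitaryGroup_iff').mp hU, (mem_unitaryGroup_iff).mp hU, ?_⟩
  rw [star_dotProduct_one_kronecker_mulVec, transpose_transpose, hK, hL, hψρ, hψσ,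
    trace_conjTranspose_mul_mul_eq_of_polar hE (isHermitian_matSqrt hσ) hVK hVL hQ hRP hGE,
    fidelity_eq_norm_trace_sq hρ hσ]

/-- Uhlmann's theorem: if |ψ_ρ⟩, |ψ_σ⟩ ∈ X ⊗ Y purify ρ and σ
(with dim Y ≥ dim X), there is a unitary U on Y with
|⟨ψ_σ|(I_X ⊗ U)|ψ_ρ⟩|² = F(ρ,σ). -/
theorem uhlmann
    {X Y : Type*} [Fintype X] [DecidableEq X] [Fintype Y] [DecidableEq Y]
    (hdim : Fintype.card X ≤ Fintype.card Y)
    (ρ σ : Matrix X X ℂ) (hρ : IsDensity ρ) (hσ : IsDensity σ)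
    (ψρ ψσ : X × Y → ℂ)
    (hψρ : redX ψρ = ρ) (hψσ : redX ψσ = σ)
    (hψρu : ∑ p, ‖ψρ p‖ ^ 2 = 1) (hψσu : ∑ p, ‖ψσ p‖ ^ 2 = 1) :
    ∃ U : Matrix Y Y ℂ, Uᴴ * U = 1 ∧ U * Uᴴ = 1 ∧
      ‖star ψσ ⬝ᵥ ((1 : Matrix X X ℂ) ⊗ₖ U).mulVec ψρ‖ ^ 2 =
        fidelity ρ σ :=
  uhlmann_general hdim ρ σ ψρ ψσ hψρ hψσ
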